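/- arXiv:2311.14043 — 4 statements merged into one kernel-verified Lean document; each statement's English description precedes it below -/
import Mathlib

section
/- Any function μ : ℕ → [1,∞) satisfying both μ(x) ≥ 1 + (1 - 2^{-x}) μ(x) and μ(x) ≥ 1 + (1/2) μ(x+1) for all x ≥ 1 satisfies μ(x) ≥ 1 + 2^x for all x ≥ 1; consequently (1/2)^t μ(x+t) ≥ (1/2)^t + 2^x for all t ≥ 0, which does not converge to 0 as t → ∞. -/
open Filter Topology

/-- Any `μ : ℕ → [1,∞)` satisfying both Lyapunov inequalities
`μ(x) ≥ 1 + (1 - 2^{-x}) μ(x)` and `μ(x) ≥ 1 + (1/2) μ(x+1)` for all `x ≥ 1` satisfies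
`μ(x) ≥ 1 + 2^x` for all `x ≥ 1`; consequently `(1/2)^t μ(x+t) ≥ (1/2)^t + 2^x` for all
`t ≥ 0`, and `(1/2)^t μ(x+t)` does not converge to `0` as `t → ∞`. -/
theorem no_uniform_lyapunov (μ : ℕ → ℝ) (hμ : ∀ x, 1 ≤ μ x)
    (h1 : ∀ x : ℕ, 1 ≤ x → μ x ≥ 1 + (1 - (1/2 : ℝ)^x) * μ x)
    (h2 : ∀ x : ℕ, 1 ≤ x → μ x ≥ 1 + (1/2 : ℝ) * μ (x+1)) :
    (∀ x : ℕ, 1 ≤ x → μ x ≥ 1 + 2^x)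
      ∧ (∀ x : ℕ, 1 ≤ x → ∀ t : ℕ, (1/2 : ℝ)^t * μ (x+t) ≥ (1/2 : ℝ)^t + 2^x)
      ∧ (∀ x : ℕ, 1 ≤ x →
          ¬ Tendsto (fun t : ℕ => (1/2 : ℝ)^t * μ (x+t)) atTop (𝓝 0)) := by
  -- From h1: (1/2)^x * μ x ≥ 1, so μ x ≥ 2^x.
  have hpow : ∀ x : ℕ, 1 ≤ x → μ x ≥ 2^x := by
    intro x hx
    have h := h1 x hx
    have hkey : (1/2 : ℝ)^x * μ x ≥ 1 := by nlinarith
    have hp : (0:ℝ) < (1/2 : ℝ)^x := by positivity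
    have h2x : (2:ℝ)^x * (1/2 : ℝ)^x = 1 := by
      rw [← mul_pow]; norm_num
    nlinarith [mul_le_mul_of_nonneg_left hkey (le_of_lt (show (0:ℝ) < 2^x by positivity))]
  have hmain : ∀ x : ℕ, 1 ≤ x → μ x ≥ 1 + 2^x := by
    intro x hx
    have ha := h2 x hx
    have hb := hpow (x+1) (by omega)
    have : (2:ℝ)^(x+1) = 2 * 2^x := by ring
    nlinarith
  have hsecond : ∀ x : ℕ, 1 ≤ x → ∀ t : ℕ, (1/2 : ℝ)^t * μ (x+t) ≥ (1/2 : ℝ)^t + 2^x := by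
    intro x hx t
    have h := hmain (x+t) (by omega)
    have hp : (0:ℝ) < (1/2 : ℝ)^t := by positivity
    have hkey : (1/2 : ℝ)^t * (2:ℝ)^(x+t) = 2^x := by
      rw [pow_add]
      have : ((1/2:ℝ)*2)^t = (1/2:ℝ)^t * 2^t := mul_pow _ _ _
      norm_num at this
      rw [show (1/2:ℝ)^t*((2:ℝ)^x*2^t) = ((1/2:ℝ)^t*2^t)*2^x from by ring, ← this, one_mul]
    nlinarith
  refine ⟨hmain, hsecond, ?_⟩
  intro x hx hT
  have h2x : (2:ℝ) ≤ 2^x := by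
    calc (2:ℝ) = 2^1 := by norm_num
    _ ≤ 2^x := by apply pow_le_pow_right₀ (by norm_num) hx
  obtain ⟨t, ht⟩ := (hT.eventually (eventually_lt_nhds (show (0:ℝ) < 1 by norm_num))).exists
  have hb := hsecond x hx t
  have hp : (0:ℝ) < (1/2 : ℝ)^t := by positivity
  nlinarith
end

section
/- The total masses of the occupation measures η^{φⁿ}_1 converge to 4 as n → ∞, while the total mass of the occupation measure of the limiting strategy φ(x) ≡ 2 is 2; hence the sequence η^{φ^{n_i}}_1 cannot converge weakly to η^φ_1 for any subsequence. -/
open Filter Topology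

/-- Transition kernel of the MDP of Example 5.1 on state space `ℕ` with actions `{1,2}`:
`0` is absorbing; action `1`: `p(0|x,1) = 2^{-x}`, `p(x|x,1) = 1 - 2^{-x}`;
action `2`: `p(0|x,2) = 1/2`, `p(x+1|x,2) = 1/2`. -/
noncomputable def Pkernel (a x y : ℕ) : ℝ :=
  if x = 0 then (if y = 0 then 1 else 0)
  else if a = 1 then
    (if y = 0 then (1/2 : ℝ)^x else if y = x then 1 - (1/2 : ℝ)^x else 0)
  else (if y = 0 then (1/2 : ℝ) else if y = x + 1 then (1/2 : ℝ) else 0)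

/-- `probn q t x y`: probability that the Markov chain with kernel `q` started at `x`
is at `y` at time `t`. -/
noncomputable def probn (q : ℕ → ℕ → ℝ) : ℕ → ℕ → ℕ → ℝ
  | 0, x, y => if y = x then 1 else 0
  | (t+1), x, y => ∑' z : ℕ, probn q t x z * q z y

/-- Occupation measure (marginal on states) of the stationary chain with kernel `q`
started at `x₀`: expected total number of time steps spent at `y`. -/
noncomputable def occ (q : ℕ → ℕ → ℝ) (x₀ y : ℕ) : ℝ :=
  ∑' t : ℕ, probn q t x₀ y

/-- The deterministic stationary strategy `φⁿ`: action `2` on states `x ≤ n`,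
action `1` on states `x > n`. -/
def phi (n x : ℕ) : ℕ := if x ≤ n then 2 else 1

/-- The Markov kernel induced by the strategy `φⁿ`. -/
noncomputable def qphi (n : ℕ) (x y : ℕ) : ℝ := Pkernel (phi n x) x y

/-- The Markov kernel induced by the stationary strategy `φ(x) ≡ 2`. -/
noncomputable def qphi2 (x y : ℕ) : ℝ := Pkernel 2 x y

/-! Both chains start at `1` and, until absorbed at `0`, walk along a deterministic path, so the
state at time `t` is `0` or the `t`-th point of the path. Hence the mass of the occupation measure
off `0` is `∑ₜ P(not absorbed by time t)`. For `φ ≡ 2` this is `∑ 2⁻ᵗ = 2`. Under `φⁿ` the chain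
reaches `n + 1` with probability `2⁻ⁿ` and then waits there a geometric time of mean `2ⁿ⁺¹`,
giving `2 - 2¹⁻ⁿ + 2 → 4`. Integrating the indicator of `{y ≠ 0}` shows that weak convergence
would force the masses to converge to `2`. -/

open Finset

/-- The chain with kernel `q` is absorbed at `0`, and otherwise walks along the path `s`:
from `s t` it moves to `s (t + 1)` with probability `p t` and to `0` with probability `1 - p t`. -/
structure IsAbsorbedOffPath (q : ℕ → ℕ → ℝ) (s : ℕ → ℕ) (p : ℕ → ℝ) : Prop where
  absorbing : ∀ y, q 0 y = if y = 0 then 1 else 0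
  path_ne_zero : ∀ t, s t ≠ 0
  step : ∀ t y, q (s t) y = if y = 0 then 1 - p t else if y = s (t + 1) then p t else 0

namespace IsAbsorbedOffPath

variable {q : ℕ → ℕ → ℝ} {s : ℕ → ℕ} {p : ℕ → ℝ}

theorem probn_eq (h : IsAbsorbedOffPath q s p) (t y : ℕ) :
    probn q t (s 0) y =
      if y = 0 then 1 - ∏ i ∈ range t, p i else if y = s t then ∏ i ∈ range t, p i else 0 := by
  induction t generalizing y with
  | zero =>
    by_cases hy : y = 0
    · simp [probn, hy, (h.path_ne_zero 0).symm]
    · simp [probn, hy]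
  | succ t ih =>
    have hsupp : ∀ z ∉ ({0, s t} : Finset ℕ), probn q t (s 0) z * q z y = 0 := by
      intro z hz
      simp only [mem_insert, mem_singleton, not_or] at hz
      rw [ih, if_neg hz.1, if_neg hz.2, zero_mul]
    have hsum : probn q (t + 1) (s 0) y =
        (1 - ∏ i ∈ range t, p i) * q 0 y + (∏ i ∈ range t, p i) * q (s t) y := by
      rw [probn, tsum_eq_sum hsupp, sum_pair (h.path_ne_zero t).symm, ih, ih,
        if_pos rfl, if_neg (h.path_ne_zero t), if_pos rfl]
    rw [hsum, h.absorbing, h.step, prod_range_succ]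
    by_cases hy : y = 0
    · simp only [hy, if_true]
      ring
    · by_cases hys : y = s (t + 1) <;> simp [hy, hys, h.path_ne_zero]

theorem occ_eq (h : IsAbsorbedOffPath q s p) {y : ℕ} (hy : y ≠ 0) :
    occ q (s 0) y = ∑' t : s ⁻¹' {y}, ∏ i ∈ range t, p i := by
  rw [occ, _root_.tsum_subtype (s ⁻¹' {y}) fun t => ∏ i ∈ range t, p i]
  refine tsum_congr fun t => ?_
  rw [h.probn_eq, if_neg hy]
  by_cases hyt : y = s t
  · simp [hyt]
  · simp [hyt, Ne.symm hyt]

/-- The mass of the occupation measure off the absorbing state is the expected absorption time,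
`∑ t, P(not absorbed by time t)`. -/
theorem hasSum_occ (h : IsAbsorbedOffPath q s p) {m : ℝ}
    (hm : HasSum (fun t => ∏ i ∈ range t, p i) m) :
    HasSum (fun y => if y = 0 then 0 else occ q (s 0) y) m := by
  refine (hm.tsum_fiberwise s).congr_fun fun y => ?_
  split_ifs with hy
  · have : s ⁻¹' {y} = ∅ := by
      ext t
      simp [hy, h.path_ne_zero t]
    simp [this]
  · exact h.occ_eq hy

end IsAbsorbedOffPath

theorem isAbsorbedOffPath_qphi2 : IsAbsorbedOffPath qphi2 (· + 1) fun _ => 1 / 2 where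
  absorbing y := by simp [qphi2, Pkernel]
  path_ne_zero t := t.succ_ne_zero
  step t y := by
    simp only [qphi2, Pkernel, t.succ_ne_zero, if_false]
    norm_num

theorem isAbsorbedOffPath_qphi (n : ℕ) :
    IsAbsorbedOffPath (qphi n) (fun t => min t n + 1)
      fun t => if t < n then 1 / 2 else 1 - (1 / 2) ^ (n + 1) where
  absorbing y := by simp [qphi, Pkernel]
  path_ne_zero t := (min t n).succ_ne_zero
  step t y := by
    rcases lt_or_ge t n with ht | ht
    · have hmin : min (t + 1) n = t + 1 := min_eq_left ht
      simp only [qphi, Pkernel, phi, min_eq_left ht.le, hmin, if_pos ht,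
        if_pos (show t + 1 ≤ n from ht), t.succ_ne_zero, if_false]
      norm_num
    · simp only [qphi, Pkernel, phi, min_eq_right ht, min_eq_right (ht.trans t.le_succ),
        if_neg ht.not_gt, n.succ_ne_zero, if_false]
      norm_num

theorem hasSum_mass_qphi2 :
    HasSum (fun y => if y = 0 then 0 else occ qphi2 1 y) 2 := by
  refine isAbsorbedOffPath_qphi2.hasSum_occ ?_
  simp only [prod_const, card_range]
  convert hasSum_geometric_of_lt_one (r := (1 / 2 : ℝ)) (by norm_num) (by norm_num)
  norm_num

theorem hasSum_mass_qphi (n : ℕ) :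
    HasSum (fun y => if y = 0 then 0 else occ (qphi n) 1 y) (4 - 2 * (1 / 2) ^ n) := by
  set r : ℝ := 1 - (1 / 2) ^ (n + 1)
  set p : ℕ → ℝ := fun t => if t < n then 1 / 2 else r
  have hhead : ∀ t ≤ n, ∏ i ∈ range t, p i = (1 / 2) ^ t := fun t ht =>
    (prod_congr rfl fun i hi => if_pos ((mem_range.1 hi).trans_le ht)).trans (by simp)
  have htail : ∀ k, ∏ i ∈ range (k + n), p i = (1 / 2) ^ n * r ^ k := fun k => by
    rw [add_comm, prod_range_add, hhead n le_rfl,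
      prod_congr rfl fun i _ => if_neg (Nat.not_lt.2 (Nat.le_add_right n i)), prod_const,
      card_range]
  have hr₀ : 0 ≤ r := sub_nonneg.2 (pow_le_one₀ (by norm_num) (by norm_num))
  have hr₁ : r < 1 := sub_lt_self 1 (by positivity)
  suffices hW : HasSum (fun t => ∏ i ∈ range t, p i) (4 - 2 * (1 / 2) ^ n) by
    simpa using (isAbsorbedOffPath_qphi n).hasSum_occ hW
  have hval :
      (1 / 2) ^ n * (1 - r)⁻¹ = 4 - 2 * (1 / 2) ^ n - ∑ i ∈ range n, ∏ j ∈ range i, p j := by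
    rw [sum_congr rfl fun i hi => hhead i (mem_range.1 hi).le, geom_sum_eq (by norm_num)]
    simp only [r, sub_sub_cancel, pow_succ]
    field_simp
    ring
  rw [← hasSum_nat_add_iff' n, ← hval]
  simp only [htail]
  exact (hasSum_geometric_of_lt_one hr₀ hr₁).mul_left _

theorem tendsto_tsum_ite_zero_of_forall_bounded {ι : Type*} {l : Filter ι} {μ : ι → ℕ → ℝ}
    {ν : ℕ → ℝ}
    (h : ∀ g : ℕ → ℝ, (∃ C, ∀ y, |g y| ≤ C) → g 0 = 0 →
      Tendsto (fun i => ∑' y, g y * μ i y) l (𝓝 (∑' y, g y * ν y))) :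
    Tendsto (fun i => ∑' y, if y = 0 then 0 else μ i y) l
      (𝓝 (∑' y, if y = 0 then 0 else ν y)) := by
  have hg := h (fun y => if y = 0 then 0 else 1) ⟨1, fun y => by split_ifs <;> norm_num⟩ rfl
  simpa only [ite_mul, zero_mul, one_mul] using hg

/-- The total masses of the occupation measures `η^{φⁿ}_1` converge to `4` as `n → ∞`,
while the occupation measure of the limiting strategy `φ(x) ≡ 2` has total mass `2`; hence
no subsequence of `(η^{φⁿ}_1)` converges weakly to `η^φ_1` (weak convergence on the discrete
space meaning convergence of integrals of all bounded functions vanishing at `0`). -/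
theorem total_masses_preclude_weak_convergence :
    Tendsto (fun n : ℕ => ∑' y : ℕ, (if y = 0 then 0 else occ (qphi n) 1 y)) atTop (𝓝 4)
      ∧ (∑' y : ℕ, (if y = 0 then 0 else occ qphi2 1 y)) = 2
      ∧ ∀ s : ℕ → ℕ, StrictMono s →
          ¬ (∀ g : ℕ → ℝ, (∃ C, ∀ y, |g y| ≤ C) → g 0 = 0 →
              Tendsto (fun i : ℕ => ∑' y : ℕ, g y * occ (qphi (s i)) 1 y) atTop
                (𝓝 (∑' y : ℕ, g y * occ qphi2 1 y))) := by
  have hlim : Tendsto (fun n : ℕ => ∑' y : ℕ, (if y = 0 then 0 else occ (qphi n) 1 y))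
      atTop (𝓝 4) := by
    simp only [fun n => (hasSum_mass_qphi n).tsum_eq]
    simpa using ((tendsto_pow_atTop_nhds_zero_of_lt_one (r := (1 / 2 : ℝ)) (by norm_num)
      (by norm_num)).const_mul 2).const_sub 4
  refine ⟨hlim, hasSum_mass_qphi2.tsum_eq, fun s hs hweak => ?_⟩
  have hlim₂ := tendsto_tsum_ite_zero_of_forall_bounded hweak
  rw [hasSum_mass_qphi2.tsum_eq] at hlim₂
  exact absurd (tendsto_nhds_unique (hlim.comp hs.tendsto_atTop) hlim₂) (by norm_num)
end

section
/- In the MDP of Example 5.1, the supremal expected hitting time satisfies w*(x) = 2 + 2^x for every x ≥ 1 and w*(0) = 0. -/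
/-- A history is a list of (action, resulting state) pairs, most recent first.
`curState x₀ h` is the current state after history `h` starting from `x₀`. -/
def curState (x₀ : ℕ) : List (ℕ × ℕ) → ℕ
  | [] => x₀
  | (_, y) :: _ => y

/-- A (randomized, history-dependent) strategy assigns to the initial state and a history
a probability distribution over actions; `σ x₀ h a` is the probability of action `a`. -/
def IsStrategy (σ : ℕ → List (ℕ × ℕ) → ℕ → ℝ) : Prop :=
  ∀ x₀ h, (∀ a, 0 ≤ σ x₀ h a) ∧ σ x₀ h 1 + σ x₀ h 2 = 1
    ∧ ∀ a, a ≠ 1 → a ≠ 2 → σ x₀ h a = 0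

/-- Probability that the controlled process under `σ` started at `x₀` realizes the
trajectory recorded by the history `h` (most recent pair first). -/
noncomputable def trajProb (σ : ℕ → List (ℕ × ℕ) → ℕ → ℝ) (x₀ : ℕ) :
    List (ℕ × ℕ) → ℝ
  | [] => 1
  | (a, y) :: h => trajProb σ x₀ h * σ x₀ h a * Pkernel a (curState x₀ h) y

/-- `Pne σ x₀ t`: probability that under strategy `σ` started at `x₀` the state at time `t`
is nonzero, i.e. `P^σ_{x₀}(X_t ≠ 0) = P^σ_{x₀}(T₀ > t)`. -/
noncomputable def Pne (σ : ℕ → List (ℕ × ℕ) → ℕ → ℝ) (x₀ t : ℕ) : ℝ :=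
  ∑' h : {h : List (ℕ × ℕ) // h.length = t ∧ curState x₀ h ≠ 0}, trajProb σ x₀ h.1

/-- Expected hitting time of `0`: `E^σ_{x₀}[T₀] = ∑_{t=0}^∞ P^σ_{x₀}(T₀ > t)`. -/
noncomputable def hittingE (σ : ℕ → List (ℕ × ℕ) → ℕ → ℝ) (x₀ : ℕ) : ℝ :=
  ∑' t : ℕ, Pne σ x₀ t

/-! Upper bound: `v c = 2 + 2 ^ c` (with `v 0 = 0`) satisfies `1 + ∑ y, p(y|c,a) v y ≤ v c`
in every state `c ≠ 0` for both actions, with equality for action `2`. Averaging over the actions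
a strategy picks gives `P(X_t ≠ 0) + E[v X_{t+1}] ≤ E[v X_t]` for every strategy, and telescoping
bounds `E[T₀] = ∑ t, P(X_t ≠ 0)` by `v x`; in particular `E[T₀] = 0` from `x = 0`.

Lower bound: the strategy playing `2` up to state `x + n` and `1` above avoids `0` along a single
path, climbing from `x` to `x + n + 1` and then staying there, so
`P(X_t ≠ 0) = 2^{-min t (n+1)} (1 - 2^{-(x+n+1)})^{t-(n+1)}`, whose sum is `2 + 2^x - 2^{-n}`. -/

open scoped ENNReal

lemma Pkernel_nonneg (a x y : ℕ) : 0 ≤ Pkernel a x y := by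
  have hpos : (0 : ℝ) ≤ (1 / 2) ^ x := by positivity
  have hle : (1 / 2 : ℝ) ^ x ≤ 1 := pow_le_one₀ (by norm_num) (by norm_num)
  unfold Pkernel
  split_ifs <;> linarith

def nextState (a c : ℕ) : ℕ := if a = 1 then c else c + 1

lemma Pkernel_eq_zero {a c y : ℕ} (hy : y ≠ 0) (hyc : y ≠ nextState a c) :
    Pkernel a c y = 0 := by
  unfold nextState at hyc
  unfold Pkernel
  split_ifs at hyc ⊢ <;> simp_all

lemma Pkernel_zero_left (a : ℕ) {y : ℕ} (hy : y ≠ 0) : Pkernel a 0 y = 0 := by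
  simp [Pkernel, hy]

lemma Pkernel_one_self {c : ℕ} (hc : c ≠ 0) : Pkernel 1 c c = 1 - (1 / 2) ^ c := by
  simp [Pkernel, hc]

lemma Pkernel_two_succ {c : ℕ} (hc : c ≠ 0) : Pkernel 2 c (c + 1) = 1 / 2 := by
  simp [Pkernel, hc]

lemma tsum_ofReal_Pkernel_mul (a c : ℕ) {v : ℕ → ℝ≥0∞} (hv : v 0 = 0) :
    ∑' y, ENNReal.ofReal (Pkernel a c y) * v y
      = ENNReal.ofReal (Pkernel a c (nextState a c)) * v (nextState a c) := by
  refine tsum_eq_single _ fun y hy => ?_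
  rcases eq_or_ne y 0 with rfl | hy0
  · rw [hv, mul_zero]
  · rw [Pkernel_eq_zero hy0 hy, ENNReal.ofReal_zero, zero_mul]

lemma tsum_ite_length_succ {α : Type*} (g : List α → ℝ≥0∞) (t : ℕ) :
    (∑' h, if h.length = t + 1 then g h else 0)
      = ∑' h, if h.length = t then ∑' p, g (p :: h) else 0 := by
  have hcons : Function.Injective (fun q : α × List α => q.1 :: q.2) :=
    fun q r hqr => Prod.ext (List.cons.inj hqr).1 (List.cons.inj hqr).2
  rw [← hcons.tsum_eq, ENNReal.tsum_prod', ENNReal.tsum_comm]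
  · congr 1; ext h
    split_ifs with hh <;> simp [hh]
  · rintro (_ | ⟨p, h⟩) hh
    · simp at hh
    · exact ⟨(p, h), rfl⟩

def stepCost (c : ℕ) : ℝ≥0∞ := if c = 0 then 0 else 1

/-- `E^σ_{x₀}[f(X_t)]`, taken in `ℝ≥0∞` so that sums over histories need no summability
side conditions. -/
noncomputable def expectState (σ : ℕ → List (ℕ × ℕ) → ℕ → ℝ) (x₀ t : ℕ) (f : ℕ → ℝ≥0∞) :
    ℝ≥0∞ :=
  ∑' h : List (ℕ × ℕ),
    if h.length = t then ENNReal.ofReal (trajProb σ x₀ h) * f (curState x₀ h) else 0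

def IsBellmanSupersolution (v : ℕ → ℝ≥0∞) : Prop :=
  ∀ a, a = 1 ∨ a = 2 → ∀ c, stepCost c + ∑' y, ENNReal.ofReal (Pkernel a c y) * v y ≤ v c

section Strategy

variable {σ : ℕ → List (ℕ × ℕ) → ℕ → ℝ}

lemma trajProb_nonneg (hσ : IsStrategy σ) (x₀ : ℕ) (h : List (ℕ × ℕ)) :
    0 ≤ trajProb σ x₀ h := by
  induction h with
  | nil => exact zero_le_one
  | cons p h ih => exact mul_nonneg (mul_nonneg ih ((hσ x₀ h).1 _)) (Pkernel_nonneg _ _ _)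

lemma add_tsum_ofReal_strategy_mul_le (hσ : IsStrategy σ) (x₀ : ℕ) (h : List (ℕ × ℕ))
    {k B : ℝ≥0∞} {g : ℕ → ℝ≥0∞} (h₁ : k + g 1 ≤ B) (h₂ : k + g 2 ≤ B) :
    k + ∑' a, ENNReal.ofReal (σ x₀ h a) * g a ≤ B := by
  set s₁ := ENNReal.ofReal (σ x₀ h 1)
  set s₂ := ENNReal.ofReal (σ x₀ h 2)
  have hs : s₁ + s₂ = 1 := by
    rw [← ENNReal.ofReal_add ((hσ x₀ h).1 1) ((hσ x₀ h).1 2), (hσ x₀ h).2.1, ENNReal.ofReal_one]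
  have hsupp : ∀ a ∉ ({1, 2} : Finset ℕ), ENNReal.ofReal (σ x₀ h a) * g a = 0 := by
    intro a ha
    simp only [Finset.mem_insert, Finset.mem_singleton, not_or] at ha
    rw [(hσ x₀ h).2.2 a ha.1 ha.2, ENNReal.ofReal_zero, zero_mul]
  calc k + ∑' a, ENNReal.ofReal (σ x₀ h a) * g a
      = s₁ * (k + g 1) + s₂ * (k + g 2) := by
        rw [tsum_eq_sum hsupp, Finset.sum_pair (by norm_num), mul_add, mul_add,
          add_add_add_comm, ← add_mul, hs, one_mul]
    _ ≤ s₁ * B + s₂ * B := by gcongr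
    _ = B := by rw [← add_mul, hs, one_mul]

lemma expectState_zero (x₀ : ℕ) (f : ℕ → ℝ≥0∞) : expectState σ x₀ 0 f = f x₀ := by
  rw [expectState, tsum_eq_single []]
  · simp [trajProb, curState]
  · intro h hh
    simp [List.length_eq_zero_iff, hh]

lemma expectState_succ (hσ : IsStrategy σ) (x₀ t : ℕ) (f : ℕ → ℝ≥0∞) :
    expectState σ x₀ (t + 1) f
      = ∑' h : List (ℕ × ℕ), if h.length = t then ENNReal.ofReal (trajProb σ x₀ h) *
          ∑' a, ENNReal.ofReal (σ x₀ h a) *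
            ∑' y, ENNReal.ofReal (Pkernel a (curState x₀ h) y) * f y else 0 := by
  rw [expectState, tsum_ite_length_succ]
  congr 1; ext h
  split_ifs
  · trans ∑' (a : ℕ) (y : ℕ), ENNReal.ofReal (trajProb σ x₀ ((a, y) :: h)) * f y
    · exact ENNReal.tsum_prod (f := fun a y => ENNReal.ofReal (trajProb σ x₀ ((a, y) :: h)) * f y)
    rw [← ENNReal.tsum_mul_left]
    congr 1; ext a
    rw [← ENNReal.tsum_mul_left, ← ENNReal.tsum_mul_left]
    congr 1; ext y
    rw [trajProb, ENNReal.ofReal_mul (mul_nonneg (trajProb_nonneg hσ x₀ h) ((hσ x₀ h).1 a)),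
      ENNReal.ofReal_mul (trajProb_nonneg hσ x₀ h)]
    ring
  · rfl

lemma expectState_stepCost_add_succ_le (hσ : IsStrategy σ) {v : ℕ → ℝ≥0∞}
    (hv : IsBellmanSupersolution v) (x₀ t : ℕ) :
    expectState σ x₀ t stepCost + expectState σ x₀ (t + 1) v ≤ expectState σ x₀ t v := by
  rw [expectState_succ hσ, expectState, expectState, ← ENNReal.tsum_add]
  refine ENNReal.tsum_le_tsum fun h => ?_
  split_ifs
  · rw [← mul_add]
    gcongr
    exact add_tsum_ofReal_strategy_mul_le hσ x₀ h (hv 1 (.inl rfl) _) (hv 2 (.inr rfl) _)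
  · simp

lemma sum_expectState_stepCost_add_le (hσ : IsStrategy σ) {v : ℕ → ℝ≥0∞}
    (hv : IsBellmanSupersolution v) (x₀ m : ℕ) :
    ∑ t ∈ Finset.range m, expectState σ x₀ t stepCost + expectState σ x₀ m v ≤ v x₀ := by
  induction m with
  | zero => simp [expectState_zero]
  | succ m ih =>
    rw [Finset.sum_range_succ, add_assoc]
    exact le_trans (by gcongr; exact expectState_stepCost_add_succ_le hσ hv x₀ m) ih

lemma tsum_expectState_stepCost_le (hσ : IsStrategy σ) {v : ℕ → ℝ≥0∞}
    (hv : IsBellmanSupersolution v) (x₀ : ℕ) :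
    ∑' t, expectState σ x₀ t stepCost ≤ v x₀ :=
  ENNReal.tsum_le_of_sum_range_le fun m =>
    le_trans le_self_add (sum_expectState_stepCost_add_le hσ hv x₀ m)

lemma Pne_eq_toReal_expectState (hσ : IsStrategy σ) (x₀ t : ℕ) :
    Pne σ x₀ t = (expectState σ x₀ t stepCost).toReal := by
  have hterm : ∀ h : List (ℕ × ℕ), (if h.length = t then ENNReal.ofReal (trajProb σ x₀ h) *
      stepCost (curState x₀ h) else 0)
        = {h | h.length = t ∧ curState x₀ h ≠ 0}.indicator
            (fun h => ENNReal.ofReal (trajProb σ x₀ h)) h := by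
    intro h
    by_cases hl : h.length = t <;> by_cases hc : curState x₀ h = 0 <;> simp [stepCost, hl, hc]
  rw [expectState, tsum_congr hterm, ← tsum_subtype,
    ENNReal.tsum_toReal_eq fun _ => ENNReal.ofReal_ne_top]
  exact tsum_congr fun h => (ENNReal.toReal_ofReal (trajProb_nonneg hσ x₀ h.1)).symm

lemma hittingE_eq_tsum_toReal (hσ : IsStrategy σ) (x₀ : ℕ) :
    hittingE σ x₀ = ∑' t, (expectState σ x₀ t stepCost).toReal :=
  tsum_congr (Pne_eq_toReal_expectState hσ x₀)

lemma hittingE_nonneg (hσ : IsStrategy σ) (x₀ : ℕ) : 0 ≤ hittingE σ x₀ := by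
  rw [hittingE_eq_tsum_toReal hσ]
  exact tsum_nonneg fun _ => ENNReal.toReal_nonneg

lemma hittingE_le_of_isBellmanSupersolution (hσ : IsStrategy σ) {v : ℕ → ℝ≥0∞}
    (hv : IsBellmanSupersolution v) {x₀ : ℕ} (hx₀ : v x₀ ≠ ⊤) :
    hittingE σ x₀ ≤ (v x₀).toReal := by
  have hle := tsum_expectState_stepCost_le hσ hv x₀
  have hfin : ∀ t, expectState σ x₀ t stepCost ≠ ⊤ :=
    fun t => ne_top_of_le_ne_top hx₀ ((ENNReal.le_tsum t).trans hle)
  rw [hittingE_eq_tsum_toReal hσ, ← ENNReal.tsum_toReal_eq hfin]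
  exact ENNReal.toReal_mono hx₀ hle

end Strategy

noncomputable def wStar (c : ℕ) : ℝ≥0∞ := if c = 0 then 0 else ENNReal.ofReal (2 + 2 ^ c)

lemma isBellmanSupersolution_wStar : IsBellmanSupersolution wStar := by
  rintro a ha c
  rw [tsum_ofReal_Pkernel_mul a c (if_pos rfl)]
  rcases eq_or_ne c 0 with rfl | hc
  · rcases ha with rfl | rfl <;> simp [stepCost, nextState, wStar, Pkernel]
  have hpow : (1 / 2 : ℝ) ^ c * 2 ^ c = 1 := by rw [← mul_pow]; norm_num
  have hhalf : (0 : ℝ) ≤ (1 / 2) ^ c := by positivity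
  have hhalf_le : (1 / 2 : ℝ) ^ c ≤ 1 := pow_le_one₀ (by norm_num) (by norm_num)
  rcases ha with rfl | rfl
  · simp only [stepCost, nextState, ↓reduceIte, wStar, Pkernel_one_self hc, hc]
    rw [← ENNReal.ofReal_one, ← ENNReal.ofReal_mul (by linarith),
      ← ENNReal.ofReal_add zero_le_one (by positivity)]
    exact ENNReal.ofReal_le_ofReal (by nlinarith)
  · simp only [stepCost, nextState, OfNat.ofNat_ne_one, ↓reduceIte, wStar, Pkernel_two_succ hc,
      hc, c.succ_ne_zero]
    rw [← ENNReal.ofReal_one, ← ENNReal.ofReal_mul (by norm_num),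
      ← ENNReal.ofReal_add zero_le_one (by positivity)]
    exact ENNReal.ofReal_le_ofReal (by rw [pow_succ]; linarith)

lemma toReal_wStar {c : ℕ} (hc : c ≠ 0) : (wStar c).toReal = 2 + 2 ^ c := by
  rw [wStar, if_neg hc, ENNReal.toReal_ofReal (by positivity)]

lemma hittingE_le_wStar {σ : ℕ → List (ℕ × ℕ) → ℕ → ℝ} (hσ : IsStrategy σ) (x₀ : ℕ) :
    hittingE σ x₀ ≤ (wStar x₀).toReal :=
  hittingE_le_of_isBellmanSupersolution hσ isBellmanSupersolution_wStar
    (by unfold wStar; split_ifs <;> simp)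

lemma hittingE_zero {σ : ℕ → List (ℕ × ℕ) → ℕ → ℝ} (hσ : IsStrategy σ) : hittingE σ 0 = 0 :=
  le_antisymm (by simpa [wStar] using hittingE_le_wStar hσ 0) (hittingE_nonneg hσ 0)

def policyStrategy (π : ℕ → ℕ) : ℕ → List (ℕ × ℕ) → ℕ → ℝ :=
  fun x₀ h a => if a = π (curState x₀ h) then 1 else 0

def policyPath (π : ℕ → ℕ) (x₀ : ℕ) : ℕ → List (ℕ × ℕ)
  | 0 => []
  | t + 1 =>
    let c := curState x₀ (policyPath π x₀ t)
    (π c, nextState (π c) c) :: policyPath π x₀ t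

section Policy

variable {π : ℕ → ℕ} {x₀ : ℕ}

lemma isStrategy_policyStrategy (hπ : ∀ c, π c = 1 ∨ π c = 2) :
    IsStrategy (policyStrategy π) := by
  intro x₀ h
  unfold policyStrategy
  rcases hπ (curState x₀ h) with hc | hc <;> rw [hc] <;>
    refine ⟨fun a => by split_ifs <;> norm_num, by norm_num, fun a h1 h2 => by simp [h1, h2]⟩

lemma length_policyPath (t : ℕ) : (policyPath π x₀ t).length = t := by
  induction t with
  | zero => rfl
  | succ t ih => simp [policyPath, ih]

lemma curState_policyPath_ne_zero (hx₀ : x₀ ≠ 0) (t : ℕ) :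
    curState x₀ (policyPath π x₀ t) ≠ 0 := by
  induction t with
  | zero => exact hx₀
  | succ t ih =>
    change nextState _ (curState x₀ (policyPath π x₀ t)) ≠ 0
    unfold nextState
    split_ifs
    exacts [ih, Nat.succ_ne_zero _]

lemma trajProb_policyPath_succ (t : ℕ) :
    let c := curState x₀ (policyPath π x₀ t)
    trajProb (policyStrategy π) x₀ (policyPath π x₀ (t + 1))
      = trajProb (policyStrategy π) x₀ (policyPath π x₀ t) *
          Pkernel (π c) c (nextState (π c) c) := by
  simp [policyPath, trajProb, policyStrategy]

lemma eq_policyPath_of_trajProb_ne_zero :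
    ∀ h : List (ℕ × ℕ), trajProb (policyStrategy π) x₀ h ≠ 0 → curState x₀ h ≠ 0 →
      h = policyPath π x₀ h.length
  | [], _, _ => rfl
  | (a, y) :: h, hprob, hy => by
    simp only [trajProb, mul_ne_zero_iff] at hprob
    obtain ⟨⟨hprob, ha⟩, hker⟩ := hprob
    have ha : a = π (curState x₀ h) := by_contra fun hne => ha (if_neg hne)
    have hc : curState x₀ h ≠ 0 := fun hc => hker (hc ▸ Pkernel_zero_left a hy)
    have hy : y = nextState a (curState x₀ h) :=
      by_contra fun hne => hker (Pkernel_eq_zero hy hne)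
    rw [List.length_cons, policyPath, ← eq_policyPath_of_trajProb_ne_zero h hprob hc, ← ha, ← hy]

lemma Pne_policyStrategy (hx₀ : x₀ ≠ 0) (t : ℕ) :
    Pne (policyStrategy π) x₀ t = trajProb (policyStrategy π) x₀ (policyPath π x₀ t) := by
  rw [Pne, tsum_eq_single
    ⟨policyPath π x₀ t, length_policyPath t, curState_policyPath_ne_zero hx₀ t⟩]
  rintro ⟨h, hlen, hc⟩ hne
  by_contra hprob
  exact hne (Subtype.ext (hlen ▸ eq_policyPath_of_trajProb_ne_zero h hprob hc))

end Policy

def thresholdPolicy (N c : ℕ) : ℕ := if c ≤ N then 2 else 1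

lemma isStrategy_thresholdPolicy (N : ℕ) : IsStrategy (policyStrategy (thresholdPolicy N)) :=
  isStrategy_policyStrategy fun c => by unfold thresholdPolicy; split_ifs <;> simp

lemma curState_thresholdPath (x n t : ℕ) :
    curState x (policyPath (thresholdPolicy (x + n)) x t) = x + min t (n + 1) := by
  induction t with
  | zero => simp [policyPath, curState]
  | succ t ih =>
    change nextState _ (curState x (policyPath (thresholdPolicy (x + n)) x t)) = _
    rw [ih]
    unfold thresholdPolicy nextState
    split_ifs <;> omega

lemma Pne_thresholdPolicy {x : ℕ} (hx : x ≠ 0) (n t : ℕ) :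
    Pne (policyStrategy (thresholdPolicy (x + n))) x t
      = (1 / 2) ^ min t (n + 1) * (1 - (1 / 2) ^ (x + n + 1)) ^ (t - (n + 1)) := by
  rw [Pne_policyStrategy hx]
  induction t with
  | zero => simp [policyPath, trajProb]
  | succ t ih =>
    rw [trajProb_policyPath_succ, ih, curState_thresholdPath]
    have hc : x + min t (n + 1) ≠ 0 := by omega
    unfold thresholdPolicy
    rcases le_or_gt t n with htn | htn
    · rw [if_pos (by omega), nextState, if_neg (by norm_num), Pkernel_two_succ hc,
        min_eq_left (by omega), min_eq_left (by omega), Nat.sub_eq_zero_of_le (by omega),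
        Nat.sub_eq_zero_of_le (by omega), pow_succ]
      ring
    · rw [if_neg (by omega), nextState, if_pos rfl, Pkernel_one_self hc, min_eq_right (by omega),
        min_eq_right (by omega), show t + 1 - (n + 1) = t - (n + 1) + 1 by omega, pow_succ,
        show x + (n + 1) = x + n + 1 by omega]
      ring

lemma hasSum_pow_min_mul_pow_sub (r : ℝ) {q : ℝ} (hq₀ : 0 ≤ q) (hq₁ : q < 1) (m : ℕ) :
    HasSum (fun t => r ^ min t m * q ^ (t - m))
      (∑ t ∈ Finset.range m, r ^ t + r ^ m * (1 - q)⁻¹) := by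
  refine (hasSum_nat_add_iff' m).mp ?_
  have htail : (fun t => r ^ min (t + m) m * q ^ (t + m - m)) = fun t => r ^ m * q ^ t := by
    ext t; rw [min_eq_right (by omega), Nat.add_sub_cancel]
  have hhead : ∑ t ∈ Finset.range m, r ^ min t m * q ^ (t - m) = ∑ t ∈ Finset.range m, r ^ t :=
    Finset.sum_congr rfl fun t ht => by
      rw [Finset.mem_range] at ht
      rw [min_eq_left ht.le, Nat.sub_eq_zero_of_le ht.le, pow_zero, mul_one]
  rw [htail, hhead, add_sub_cancel_left]
  exact (hasSum_geometric_of_lt_one hq₀ hq₁).mul_left _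

lemma hittingE_thresholdPolicy {x : ℕ} (hx : x ≠ 0) (n : ℕ) :
    hittingE (policyStrategy (thresholdPolicy (x + n))) x = 2 + 2 ^ x - (1 / 2) ^ n := by
  have hq₁ : (1 : ℝ) - (1 / 2) ^ (x + n + 1) < 1 := sub_lt_self _ (by positivity)
  have hq₀ : (0 : ℝ) ≤ 1 - (1 / 2) ^ (x + n + 1) :=
    sub_nonneg.mpr (pow_le_one₀ (by norm_num) (by norm_num))
  rw [hittingE, tsum_congr (Pne_thresholdPolicy hx n),
    (hasSum_pow_min_mul_pow_sub _ hq₀ hq₁ (n + 1)).tsum_eq, geom_sum_eq (by norm_num),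
    sub_sub_cancel]
  simp only [one_div, inv_pow, inv_inv]
  field_simp
  ring

/-- In the MDP of Example 5.1, the supremal expected hitting time over all strategies
satisfies `w*(x) = 2 + 2^x` for every `x ≥ 1`, and `w*(0) = 0`. -/
theorem sup_expected_hitting_time :
    (∀ x : ℕ, 1 ≤ x →
        (⨆ σ : {σ : ℕ → List (ℕ × ℕ) → ℕ → ℝ // IsStrategy σ}, hittingE σ.1 x)
          = 2 + 2^x)
      ∧ (⨆ σ : {σ : ℕ → List (ℕ × ℕ) → ℕ → ℝ // IsStrategy σ}, hittingE σ.1 0) = 0 := by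
  have : Nonempty {σ : ℕ → List (ℕ × ℕ) → ℕ → ℝ // IsStrategy σ} :=
    ⟨⟨_, isStrategy_thresholdPolicy 0⟩⟩
  constructor
  · intro x hx
    have hx₀ : x ≠ 0 := by omega
    refine ciSup_eq_of_forall_le_of_forall_lt_exists_gt
      (fun σ => toReal_wStar hx₀ ▸ hittingE_le_wStar σ.2 x) fun w hw => ?_
    obtain ⟨n, hn⟩ := exists_pow_lt_of_lt_one (sub_pos.mpr hw) (by norm_num : (1 / 2 : ℝ) < 1)
    refine ⟨⟨_, isStrategy_thresholdPolicy (x + n)⟩, ?_⟩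
    rw [hittingE_thresholdPolicy hx₀]
    linarith
  · exact (iSup_congr fun σ => hittingE_zero σ.2).trans ciSup_const
end

section
/- If a Markov decision model is uniformly absorbing at 0 for initial distribution P₀ and πⁱ are strategies with strategic measures converging weakly to that of π̂, and g is a bounded continuous function vanishing at the absorbing state, then the occupation-measure integrals converge: ∫ g dη^{πⁱ} → ∫ g dη^{π̂}; i.e., the ε/3 decomposition |∫g dη^{πⁱ} - ∫g dη^{π̂}| ≤ |E^{πⁱ}[Σ_{t=1}^{N-1} g] - E^{π̂}[Σ_{t=1}^{N-1} g]| + ḡ·E^{πⁱ}[Σ_{t=N}^∞ 𝟙{X_{t-1}≠0}] + ḡ·E^{π̂}[Σ_{t=N}^∞ 𝟙{X_{t-1}≠0}] holds and each term can be made < ε/3. -/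
open Filter Topology

/-- The 'if' direction of Theorem 2 (continuity of the projection `O : 𝒫 → 𝒟`), in its
analytic form. Let `Π` index the strategies of an MDP with isolated absorbing state;
for a strategy `π`, `q π t = E^π_{P₀}[𝟙{X_t ≠ 0}]` is the probability of non-absorption at
time `t` (nonnegative and summable, i.e. the model is absorbing), and
`Eg π t = E^π_{P₀}[g(X_t, A_{t+1})]` is the expected value of a bounded (continuous)
function `g` vanishing at the absorbing state, so that `|Eg π t| ≤ ḡ · q π t` where
`ḡ = sup|g|`, and `∫ g dη^π = ∑_t Eg π t`.
Hypotheses: the model is uniformly absorbing for `P₀` (the tails `∑_{t ≥ n} q π t` tend to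
`0` uniformly in `π`), and the strategic measures of `πⁱ` converge weakly to that of `π̂`
(so expectations of bounded continuous functions of finite-horizon histories converge:
`∑_{t<N} Eg (πⁱ) t → ∑_{t<N} Eg π̂ t` for each `N`).
Conclusion: the occupation-measure integrals converge, `∫ g dη^{πⁱ} → ∫ g dη^{π̂}`. -/
theorem projection_continuous_of_uniformly_absorbing
    {S : Type*} (q : S → ℕ → ℝ) (Eg : S → ℕ → ℝ) (gbar : ℝ)
    (πs : ℕ → S) (πhat : S)
    (hq_nonneg : ∀ π t, 0 ≤ q π t)
    (hq_summable : ∀ π : S, Summable (fun t => q π t))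
    (hbound : ∀ π t, |Eg π t| ≤ gbar * q π t)
    (huniform : ∀ ε > 0, ∃ N : ℕ, ∀ π : S, (∑' t : ℕ, q π (N + t)) < ε)
    (hweak : ∀ N : ℕ,
      Tendsto (fun i : ℕ => ∑ t ∈ Finset.range N, Eg (πs i) t) atTop
        (𝓝 (∑ t ∈ Finset.range N, Eg πhat t))) :
    Tendsto (fun i : ℕ => ∑' t : ℕ, Eg (πs i) t) atTop (𝓝 (∑' t : ℕ, Eg πhat t)) := by
  set M := max gbar 0 with hM
  have hM0 : (0:ℝ) ≤ M := le_max_right _ _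
  have hbound' : ∀ π t, |Eg π t| ≤ M * q π t := fun π t =>
    (hbound π t).trans (mul_le_mul_of_nonneg_right (le_max_left _ _) (hq_nonneg π t))
  have hsumM : ∀ π : S, Summable (fun t => M * q π t) := fun π => (hq_summable π).mul_left M
  have habs : ∀ π : S, Summable (fun t => |Eg π t|) := fun π =>
    Summable.of_nonneg_of_le (fun t => abs_nonneg _) (hbound' π) (hsumM π)
  have hS : ∀ π : S, Summable (Eg π) := fun π => (habs π).of_abs
  rw [Metric.tendsto_atTop]
  intro ε εpos
  have hε3 : 0 < ε / 3 := by linarith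
  have hε' : 0 < ε / 3 / (M + 1) := by positivity
  obtain ⟨N, hN⟩ := huniform _ hε'
  have tail : ∀ π : S, |∑' t, Eg π t - ∑ t ∈ Finset.range N, Eg π t| < ε / 3 := by
    intro π
    have habsN : Summable (fun t => |Eg π (N + t)|) := by
      have := (summable_nat_add_iff (f := fun t => |Eg π t|) N).2 (habs π)
      simpa [add_comm] using this
    have hSN : Summable (fun t => Eg π (N + t)) := habsN.of_abs
    have h1 : ∑' t, Eg π t - ∑ t ∈ Finset.range N, Eg π t = ∑' t, Eg π (N + t) := by
      have h := Summable.sum_add_tsum_nat_add (f := Eg π) N (hS π)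
      have heq : ∑' i, Eg π (i + N) = ∑' t, Eg π (N + t) :=
        tsum_congr fun t => by rw [add_comm]
      linarith
    rw [h1]
    have h2 : |∑' t, Eg π (N + t)| ≤ ∑' t, |Eg π (N + t)| := by
      simpa [Real.norm_eq_abs] using norm_tsum_le_tsum_norm (f := fun t => Eg π (N + t)) habsN
    have hqN : Summable (fun t => q π (N + t)) := by
      have := (summable_nat_add_iff (f := fun t => q π t) N).2 (hq_summable π)
      simpa [add_comm] using this
    have h3 : ∑' t, |Eg π (N + t)| ≤ M * ∑' t, q π (N + t) := by
      rw [← tsum_mul_left]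
      exact Summable.tsum_le_tsum (fun t => hbound' π (N + t)) habsN (hqN.mul_left M)
    have h4 : M * ∑' t, q π (N + t) ≤ M * (ε / 3 / (M + 1)) :=
      mul_le_mul_of_nonneg_left (le_of_lt (hN π)) hM0
    have h5 : M * (ε / 3 / (M + 1)) < ε / 3 := by
      have : M / (M + 1) < 1 := by
        rw [div_lt_one (by linarith)]; linarith
      calc M * (ε / 3 / (M + 1)) = (M / (M + 1)) * (ε / 3) := by ring
        _ < 1 * (ε / 3) := by
            exact mul_lt_mul_of_pos_right this hε3
        _ = ε / 3 := by ring
    linarith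
  obtain ⟨I, hI⟩ := Metric.tendsto_atTop.1 (hweak N) (ε / 3) hε3
  refine ⟨I, fun i hi => ?_⟩
  have hmid := hI i hi
  rw [Real.dist_eq] at hmid ⊢
  have t1 := tail (πs i)
  have t2 := tail πhat
  have := abs_sub_abs_le_abs_sub (∑' t, Eg (πs i) t - ∑' t, Eg πhat t) 0
  calc |∑' t, Eg (πs i) t - ∑' t, Eg πhat t|
      ≤ |∑' t, Eg (πs i) t - ∑ t ∈ Finset.range N, Eg (πs i) t|
        + |∑ t ∈ Finset.range N, Eg (πs i) t - ∑ t ∈ Finset.range N, Eg πhat t|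
        + |∑ t ∈ Finset.range N, Eg πhat t - ∑' t, Eg πhat t| := by
          have := abs_sub_le (∑' t, Eg (πs i) t) (∑ t ∈ Finset.range N, Eg (πs i) t)
            (∑' t, Eg πhat t)
          have h2 := abs_sub_le (∑ t ∈ Finset.range N, Eg (πs i) t)
            (∑ t ∈ Finset.range N, Eg πhat t) (∑' t, Eg πhat t)
          linarith
    _ < ε := by
          rw [abs_sub_comm (∑ t ∈ Finset.range N, Eg πhat t)] 
          linarith
end
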